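/- arXiv:math/0604518 — 2 statements merged into one kernel-verified Lean document; each statement's English description precedes it below -/
import Mathlib

section
/- Let Γ be a finite set of 2n+2 distinct points in P^n that lie on a rational normal curve D of degree n. Then Γ is self-associated: any subset of 2n+1 points of Γ imposes the same number of conditions on quadrics in P^n as Γ does. -/
open MvPolynomial

/-- The space of quadrics vanishing at the points `{p i : i ∈ s}` (points of `Pⁿ` given by
nonzero vectors in `k^{n+1}`), inside the space of all degree-2 homogeneous forms. -/
noncomputable def quadricsThrough {k : Type*} [Field k] {n N : ℕ}
    (p : Fin N → (Fin (n + 1) → k)) (s : Finset (Fin N)) :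
    Submodule k (MvPolynomial (Fin (n + 1)) k) :=
  MvPolynomial.homogeneousSubmodule (Fin (n + 1)) k 2 ⊓
    ⨅ i ∈ s, LinearMap.ker (MvPolynomial.aeval (R := k) (p i)).toLinearMap

/-- The number of conditions imposed on quadrics by the points `{p i : i ∈ s}`:
the codimension of the vanishing subspace in the `binom(n+2,2)`-dimensional space of
quadrics. -/
noncomputable def condsOnQuadrics {k : Type*} [Field k] {n N : ℕ}
    (p : Fin N → (Fin (n + 1) → k)) (s : Finset (Fin N)) : ℕ :=
  Module.finrank k (MvPolynomial.homogeneousSubmodule (Fin (n + 1)) k 2) -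
    Module.finrank k (quadricsThrough p s)

/-!
A form of degree `m` on `Pⁿ` pulls back along the rational normal curve
`[a : b] ↦ [aⁿ : aⁿ⁻¹b : ⋯ : bⁿ]` to a binary form of degree `nm`, and a nonzero binary form of
degree `d` has at most `d` zeros on `P¹`. Hence a quadric through `2n + 1` distinct points of the
curve contains the whole curve, so the quadrics through any `2n + 1` of the points are exactly
the quadrics through all of them.
-/

lemma MvPolynomial.IsHomogeneous.natDegree_aeval_X_one_le {R : Type*} [CommSemiring R]
    {F : MvPolynomial (Fin 2) R} {d : ℕ} (hF : F.IsHomogeneous d) :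
    (MvPolynomial.aeval ![(Polynomial.X : Polynomial R), 1] F).natDegree ≤ d := by
  rw [F.as_sum, map_sum]
  refine Polynomial.natDegree_sum_le_of_forall_le _ _ fun m hm => ?_
  have hm : m 0 + m 1 = d := by
    simpa [Finsupp.weight_apply, Finsupp.sum_fintype, Fin.sum_univ_two] using
      hF (mem_support_iff.mp hm)
  simp only [aeval_monomial, Finsupp.prod_fintype _ _ fun i => pow_zero _, Fin.prod_univ_two,
    Matrix.cons_val_zero, Matrix.cons_val_one, one_pow, mul_one, ← Polynomial.C_eq_algebraMap]
  exact (Polynomial.natDegree_C_mul_X_pow_le _ _).trans (by omega)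

section ProjectiveLine

variable {K : Type*} [Field K]

lemma apply_zero_ne_zero_of_apply_one_eq_zero {u : Fin 2 → K} (hu : u ≠ 0) (hu1 : u 1 = 0) :
    u 0 ≠ 0 := fun h => hu (funext fun l => by fin_cases l <;> simp [h, hu1])

lemma Polynomial.eval_homogenize_of_eq_zero (p : Polynomial K) (n : ℕ)
    {x : Fin 2 → K} (hx : x 1 = 0) :
    MvPolynomial.eval x (p.homogenize n) = p.coeff n * x 0 ^ n := by
  have hprod (m : Fin 2 →₀ ℕ) : m.prod (fun i e => x i ^ e) = x 0 ^ m 0 * x 1 ^ m 1 := by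
    rw [Finsupp.prod_fintype _ _ fun i => pow_zero (x i), Fin.prod_univ_two]
  rw [Polynomial.homogenize, map_sum, Finset.Nat.sum_antidiagonal_eq_sum_range_succ_mk,
    Finset.sum_range_succ, Finset.sum_eq_zero fun i hi => ?_]
  · simp [MvPolynomial.eval_monomial, hprod]
  · have : n - i ≠ 0 := by grind
    simp [MvPolynomial.eval_monomial, hprod, hx, this]

lemma Polynomial.degree_lt_of_eval_homogenize_eq_zero {p : Polynomial K} {d : ℕ}
    (hpd : p.natDegree ≤ d) {u : Fin 2 → K} (hu : u ≠ 0) (hu1 : u 1 = 0)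
    (hpu : MvPolynomial.eval u (p.homogenize d) = 0) : p.degree < d := by
  have hu0 := apply_zero_ne_zero_of_apply_one_eq_zero hu hu1
  rw [p.eval_homogenize_of_eq_zero d hu1] at hpu
  have hcoeff : p.coeff d = 0 := (mul_eq_zero.mp hpu).resolve_right (pow_ne_zero _ hu0)
  refine (Polynomial.degree_lt_iff_coeff_zero _ _).mpr fun m hm => ?_
  rcases hm.eq_or_lt with rfl | hm
  · exact hcoeff
  · exact Polynomial.coeff_eq_zero_of_natDegree_lt (hpd.trans_lt hm)

lemma eq_smul_of_div_eq_div {u v : Fin 2 → K} (hu : u 1 ≠ 0) (hv : v 1 ≠ 0)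
    (h : u 0 / u 1 = v 0 / v 1) : v = (v 1 / u 1) • u := by
  rw [div_eq_div_iff hu hv] at h
  ext l
  fin_cases l
  · simp only [Fin.zero_eta, Pi.smul_apply, smul_eq_mul]
    field_simp
    linear_combination -h
  · simp [div_mul_cancel₀ _ hu]

lemma eq_smul_of_apply_one_eq_zero {u v : Fin 2 → K} (hu : u ≠ 0) (hu1 : u 1 = 0)
    (hv1 : v 1 = 0) : v = (v 0 / u 0) • u := by
  ext l
  fin_cases l
  · simp [div_mul_cancel₀ _ (apply_zero_ne_zero_of_apply_one_eq_zero hu hu1)]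
  · simp [hu1, hv1]

theorem MvPolynomial.IsHomogeneous.eq_zero_of_forall_eval_eq_zero_of_lt_card {ι : Type*}
    {F : MvPolynomial (Fin 2) K} {d : ℕ} (hF : F.IsHomogeneous d)
    {s : Finset ι} {x : ι → Fin 2 → K} (hx : ∀ i ∈ s, x i ≠ 0)
    (hprop : ∀ i ∈ s, ∀ j ∈ s, i ≠ j → ∀ c : K, x j ≠ c • x i) (hd : d < s.card)
    (hFx : ∀ i ∈ s, eval (x i) F = 0) : F = 0 := by
  classical
  set p := MvPolynomial.aeval ![(Polynomial.X : Polynomial K), 1] F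
  have hpd : p.natDegree ≤ d := hF.natDegree_aeval_X_one_le
  have hFp : F = p.homogenize d := (Polynomial.homogenize_eq_of_isHomogeneous hF rfl).symm
  suffices p = 0 by rw [hFp, this, Polynomial.homogenize_zero]
  -- the affine chart `x 1 ≠ 0`, where `F` vanishes exactly at the roots of `p`
  set T := s.filter fun i => x i 1 ≠ 0
  have hroot : ∀ i ∈ T, p.eval (x i 0 / x i 1) = 0 := by
    intro i hi
    obtain ⟨his, hi1⟩ := Finset.mem_filter.mp hi
    have := hFx i his
    rw [hFp, Polynomial.eval_homogenize hpd _ hi1] at this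
    exact (mul_eq_zero.mp this).resolve_right (pow_ne_zero _ hi1)
  have hinj : Set.InjOn (fun i => x i 0 / x i 1) T := fun i hi j hj hij => by
    obtain ⟨his, hi1⟩ := Finset.mem_filter.mp hi
    obtain ⟨hjs, hj1⟩ := Finset.mem_filter.mp hj
    by_contra hne
    exact hprop i his j hjs hne _ (eq_smul_of_div_eq_div hi1 hj1 hij)
  refine Polynomial.eq_zero_of_degree_lt_of_eval_index_eq_zero T hinj ?_ hroot
  by_cases hfin : ∀ i ∈ s, x i 1 ≠ 0
  · have hTs : T = s := Finset.filter_true_of_mem hfin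
    rw [hTs]
    exact (Polynomial.degree_le_of_natDegree_le hpd).trans_lt (by exact_mod_cast hd)
  -- a zero at infinity lowers the degree of `p`, and it is the only point outside the chart
  obtain ⟨i₀, hi₀, hi₀1⟩ : ∃ i ∈ s, x i 1 = 0 := by simpa using hfin
  have hpd' : p.degree < d :=
    Polynomial.degree_lt_of_eval_homogenize_eq_zero hpd (hx i₀ hi₀) hi₀1 (hFp ▸ hFx i₀ hi₀)
  have hsub : s.erase i₀ ⊆ T := fun j hj => by
    obtain ⟨hji₀, hjs⟩ := Finset.mem_erase.mp hj
    exact Finset.mem_filter.mpr ⟨hjs, fun hj1 =>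
      hprop i₀ hi₀ j hjs hji₀.symm _ (eq_smul_of_apply_one_eq_zero (hx i₀ hi₀) hi₀1 hj1)⟩
  have hcard : d ≤ T.card := by
    have := Finset.card_le_card hsub
    rw [Finset.card_erase_of_mem hi₀] at this
    omega
  exact hpd'.trans_le (by exact_mod_cast hcard)

end ProjectiveLine

section RationalNormalCurve

variable {K : Type*} [Field K] {n : ℕ}

def rationalNormalCurve (n : ℕ) (u : Fin 2 → K) : Fin (n + 1) → K :=
  fun j => u 0 ^ (n - (j : ℕ)) * u 1 ^ (j : ℕ)

lemma rationalNormalCurve_smul (c : K) (u : Fin 2 → K) :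
    rationalNormalCurve n (c • u) = c ^ n • rationalNormalCurve n u := by
  ext j
  have hj : (j : ℕ) ≤ n := Nat.lt_succ_iff.mp j.isLt
  have hc : c ^ n = c ^ (n - (j : ℕ)) * c ^ (j : ℕ) := by rw [← pow_add, Nat.sub_add_cancel hj]
  simp only [rationalNormalCurve, Pi.smul_apply, smul_eq_mul, mul_pow, hc]
  ring

noncomputable def restrictToRationalNormalCurve (n : ℕ) (Q : MvPolynomial (Fin (n + 1)) K) :
    MvPolynomial (Fin 2) K :=
  aeval (fun j : Fin (n + 1) => X 0 ^ (n - (j : ℕ)) * X 1 ^ (j : ℕ)) Q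

lemma eval_restrictToRationalNormalCurve (Q : MvPolynomial (Fin (n + 1)) K) (u : Fin 2 → K) :
    eval u (restrictToRationalNormalCurve n Q) = eval (rationalNormalCurve n u) Q := by
  rw [restrictToRationalNormalCurve, ← aeval_eq_eval, comp_aeval_apply, aeval_eq_eval]
  congr 2 with j
  simp [rationalNormalCurve]

lemma MvPolynomial.IsHomogeneous.restrictToRationalNormalCurve
    {Q : MvPolynomial (Fin (n + 1)) K} {m : ℕ} (hQ : Q.IsHomogeneous m) :
    (restrictToRationalNormalCurve n Q).IsHomogeneous (n * m) := by
  refine hQ.aeval _ fun j => ?_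
  have hj : n - (j : ℕ) + j = n := Nat.sub_add_cancel (Nat.lt_succ_iff.mp j.isLt)
  simpa only [hj] using
    (isHomogeneous_X_pow (R := K) (0 : Fin 2) (n - j)).mul (isHomogeneous_X_pow (1 : Fin 2) j)

theorem eval_rationalNormalCurve_eq_zero_of_lt_card {ι : Type*}
    {Q : MvPolynomial (Fin (n + 1)) K} {m : ℕ} (hQ : Q.IsHomogeneous m)
    {s : Finset ι} {x : ι → Fin 2 → K} (hx : ∀ i ∈ s, x i ≠ 0)
    (hprop : ∀ i ∈ s, ∀ j ∈ s, i ≠ j → ∀ c : K, x j ≠ c • x i) (hcard : n * m < s.card)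
    (hQx : ∀ i ∈ s, eval (rationalNormalCurve n (x i)) Q = 0) (u : Fin 2 → K) :
    eval (rationalNormalCurve n u) Q = 0 := by
  have hrestrict : restrictToRationalNormalCurve n Q = 0 :=
    hQ.restrictToRationalNormalCurve.eq_zero_of_forall_eval_eq_zero_of_lt_card hx hprop hcard
      (by simpa only [eval_restrictToRationalNormalCurve] using hQx)
  rw [← eval_restrictToRationalNormalCurve, hrestrict, map_zero]

end RationalNormalCurve

section QuadricsThrough

variable {k : Type*} [Field k] {n N : ℕ} (p : Fin N → (Fin (n + 1) → k))

lemma mem_quadricsThrough {s : Finset (Fin N)} {Q : MvPolynomial (Fin (n + 1)) k} :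
    Q ∈ quadricsThrough p s ↔ Q.IsHomogeneous 2 ∧ ∀ i ∈ s, eval (p i) Q = 0 := by
  simp [quadricsThrough, Submodule.mem_iInf, aeval_eq_eval]

lemma quadricsThrough_antitone : Antitone (quadricsThrough p) := fun _ _ hst _ hQ =>
  (mem_quadricsThrough p).mpr
    ⟨((mem_quadricsThrough p).mp hQ).1, fun i hi => ((mem_quadricsThrough p).mp hQ).2 i (hst hi)⟩

end QuadricsThrough

theorem stmt_9_general (k : Type*) [Field k] (n : ℕ)
    (p : Fin (2 * n + 2) → (Fin (n + 1) → k))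
    (honcurve : ∀ i, ∃ a b : k, ¬(a = 0 ∧ b = 0) ∧
      ∀ j : Fin (n + 1), p i j = a ^ (n - (j : ℕ)) * b ^ (j : ℕ))
    (hdistinct : ∀ i i', i ≠ i' → ∀ c : k, p i' ≠ c • p i) :
    ∀ s : Finset (Fin (2 * n + 2)), s.card = 2 * n + 1 →
      condsOnQuadrics p s = condsOnQuadrics p Finset.univ := by
  intro s hs
  choose a b hab hp using honcurve
  set x : Fin (2 * n + 2) → Fin 2 → k := fun i => ![a i, b i]
  have hpx : ∀ i, p i = rationalNormalCurve n (x i) := fun i => funext (hp i)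
  have hx : ∀ i, x i ≠ 0 := fun i h => hab i ⟨congr_fun h 0, congr_fun h 1⟩
  have hprop : ∀ i i', i ≠ i' → ∀ c : k, x i' ≠ c • x i := fun i i' hii' c h =>
    hdistinct i i' hii' (c ^ n) (by rw [hpx, hpx, h, rationalNormalCurve_smul])
  suffices quadricsThrough p Finset.univ = quadricsThrough p s by
    rw [condsOnQuadrics, condsOnQuadrics, this]
  refine le_antisymm (quadricsThrough_antitone p (Finset.subset_univ s)) fun Q hQ => ?_
  obtain ⟨hQ2, hQs⟩ := (mem_quadricsThrough p).mp hQ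
  refine (mem_quadricsThrough p).mpr ⟨hQ2, fun i _ => ?_⟩
  rw [hpx]
  exact eval_rationalNormalCurve_eq_zero_of_lt_card hQ2 (fun i _ => hx i)
    (fun i _ i' _ => hprop i i') (by omega) (fun i hi => hpx i ▸ hQs i hi) (x i)

/-- Let `Γ = {p 0, …, p (2n+1)}` be `2n+2` distinct points of `Pⁿ` lying on a rational
normal curve of degree `n` (each point is `[aⁿ : aⁿ⁻¹b : ⋯ : bⁿ]` for some `(a,b) ≠ (0,0)`).
Then `Γ` is self-associated: every subset of `2n+1` of the points imposes the same number
of conditions on quadrics as all of `Γ`. -/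
theorem stmt_9 (k : Type*) [Field k] [CharZero k] (n : ℕ) (hn : 1 ≤ n)
    (p : Fin (2 * n + 2) → (Fin (n + 1) → k))
    (honcurve : ∀ i, ∃ a b : k, ¬(a = 0 ∧ b = 0) ∧
      ∀ j : Fin (n + 1), p i j = a ^ (n - (j : ℕ)) * b ^ (j : ℕ))
    (hdistinct : ∀ i i', i ≠ i' → ∀ c : k, p i' ≠ c • p i) :
    ∀ s : Finset (Fin (2 * n + 2)), s.card = 2 * n + 1 →
      condsOnQuadrics p s = condsOnQuadrics p Finset.univ :=
  stmt_9_general k n p honcurve hdistinct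
end

section
/- Let Λ ⊂ P^14 be a 6-plane meeting X = G(2,6) transversally, with Γ = X ∩ Λ, cut out by the 4×4 Pfaffians of a 6×6 skew-symmetric matrix A of linear forms on P^6. If B' is a 6×6 skew-symmetric matrix of linear forms with B' ∧ A ∧ A = 0 (as a section of ∧⁶V ⊗ O(3)), then the space of such B' has dimension 35 = dim sl(6), given the resolution O_{P^6}(−3)^{35} → O_{P^6}(−2)^{15} →^{A∧A} O_{P^6} → O_Γ → 0. -/
open MvPolynomial Matrix ExteriorAlgebra

set_option synthInstance.maxHeartbeats 1000000
set_option maxRecDepth 8000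

/-- Plücker/Pfaffian index pairs `i < j` in `Fin 6`. -/
abbrev PfIdx : Type := {p : Fin 6 × Fin 6 // p.1 < p.2}

/-- The `4×4` Pfaffian of a `6×6` skew-symmetric matrix `A` (of polynomials) obtained by
deleting the rows and columns `p.1, p.2`: these 15 quadrics cut out `Γ = G(2,6) ∩ Λ`. -/
noncomputable def pfQ {k : Type*} [Field k] (A : Matrix (Fin 6) (Fin 6) (MvPolynomial (Fin 7) k))
    (p : PfIdx) : MvPolynomial (Fin 7) k :=
  let l := (List.finRange 6).filter (fun x => x ≠ p.1.1 ∧ x ≠ p.1.2)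
  A l[0]! l[1]! * A l[2]! l[3]! - A l[0]! l[2]! * A l[1]! l[3]! +
    A l[0]! l[3]! * A l[1]! l[2]!

/-- The bivector in `⋀²(R⁶)` (R = polynomials on `P⁶`) attached to a skew matrix. -/
noncomputable def toWedge {k : Type*} [Field k]
    (B : Matrix (Fin 6) (Fin 6) (MvPolynomial (Fin 7) k)) :
    ExteriorAlgebra (MvPolynomial (Fin 7) k) (Fin 6 → MvPolynomial (Fin 7) k) :=
  ∑ p : PfIdx, B p.1.1 p.1.2 •
    (ExteriorAlgebra.ι (MvPolynomial (Fin 7) k) (M := Fin 6 → MvPolynomial (Fin 7) k) (Pi.single p.1.1 (1 : MvPolynomial (Fin 7) k)) *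
      ExteriorAlgebra.ι (MvPolynomial (Fin 7) k) (M := Fin 6 → MvPolynomial (Fin 7) k) (Pi.single p.1.2 (1 : MvPolynomial (Fin 7) k)))

/-- `B'` is a first-order deformation direction: a skew matrix of linear forms with
`B' ∧ A ∧ A = 0` (as a section of `⋀⁶V ⊗ O(3)`). -/
def IsSol {k : Type*} [Field k] (A B' : Matrix (Fin 6) (Fin 6) (MvPolynomial (Fin 7) k)) :
    Prop :=
  B'ᵀ = -B' ∧ (∀ i j, (B' i j).IsHomogeneous 1) ∧
    toWedge B' * toWedge A * toWedge A = 0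

/-! ### Auxiliary machinery -/

notation "pf(" i "," j ")" => (⟨(i, j), by decide⟩ : PfIdx)

lemma sum_pfIdx {M : Type*} [AddCommMonoid M] (h : PfIdx → M) :
    ∑ p, h p = h pf(0,1) + h pf(0,2) + h pf(0,3) + h pf(0,4) + h pf(0,5)
      + h pf(1,2) + h pf(1,3) + h pf(1,4) + h pf(1,5)
      + h pf(2,3) + h pf(2,4) + h pf(2,5)
      + h pf(3,4) + h pf(3,5) + h pf(4,5) := by
  have e : (Finset.univ : Finset PfIdx).val
      = (↑([pf(0,1), pf(0,2), pf(0,3), pf(0,4), pf(0,5), pf(1,2), pf(1,3), pf(1,4), pf(1,5),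
          pf(2,3), pf(2,4), pf(2,5), pf(3,4), pf(3,5), pf(4,5)] : List PfIdx) : Multiset PfIdx) := by
    decide
  rw [Finset.sum, e]
  simp [add_assoc]

section Aux

variable (k : Type*) [Field k]

/-- The generators `e_i` of the exterior algebra. -/
noncomputable def ff (i : Fin 6) : ExteriorAlgebra (MvPolynomial (Fin 7) k) (Fin 6 → MvPolynomial (Fin 7) k) :=
  ι (MvPolynomial (Fin 7) k) (M := Fin 6 → MvPolynomial (Fin 7) k) (Pi.single i (1 : MvPolynomial (Fin 7) k))

/-- The top exterior power generator `e_0 ∧ ⋯ ∧ e_5`. -/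
noncomputable def ww : ExteriorAlgebra (MvPolynomial (Fin 7) k) (Fin 6 → MvPolynomial (Fin 7) k) :=
  ff k 0 * (ff k 1 * (ff k 2 * (ff k 3 * (ff k 4 * ff k 5))))

lemma ff_sq (i : Fin 6) : ff k i * ff k i = 0 := ι_sq_zero _

lemma ff_sq' (i : Fin 6) (x : ExteriorAlgebra (MvPolynomial (Fin 7) k) (Fin 6 → MvPolynomial (Fin 7) k)) :
    ff k i * (ff k i * x) = 0 := by
  rw [← mul_assoc, ff_sq, zero_mul]

lemma ff_swap (i j : Fin 6) (_h : j < i) : ff k i * ff k j = -(ff k j * ff k i) :=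
  eq_neg_of_add_eq_zero_left (ι_add_mul_swap _ _)

lemma ff_swap' (i j : Fin 6) (x : ExteriorAlgebra (MvPolynomial (Fin 7) k) (Fin 6 → MvPolynomial (Fin 7) k))
    (_h : j < i) : ff k i * (ff k j * x) = -(ff k j * (ff k i * x)) := by
  rw [← mul_assoc, ff_swap k i j _h, neg_mul, mul_assoc]

lemma toWedge_eq (B : Matrix (Fin 6) (Fin 6) (MvPolynomial (Fin 7) k)) :
    toWedge B = ∑ p : PfIdx, B p.1.1 p.1.2 • (ff k p.1.1 * ff k p.1.2) := rfl

set_option maxHeartbeats 4000000 in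
lemma mp01 (A : Matrix (Fin 6) (Fin 6) (MvPolynomial (Fin 7) k)) :
    (ff k 0 * ff k 1) * (toWedge A * toWedge A) = ((2 : MvPolynomial (Fin 7) k) * pfQ A pf(0,1)) • ww k := by
  rw [toWedge_eq, sum_pfIdx (fun p => A p.1.1 p.1.2 • (ff k p.1.1 * ff k p.1.2))]
  rw [show pfQ A pf(0,1) = A 2 3 * A 4 5 - A 2 4 * A 3 5 + A 2 5 * A 3 4 from rfl]
  simp (config := { decide := true }) only [add_mul, mul_add, smul_mul_assoc, mul_smul_comm,
    smul_smul, mul_assoc, ff_swap, ff_swap', ff_sq, ff_sq', mul_neg, neg_neg, mul_zero, zero_mul,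
    mul_one, one_mul, smul_zero, zero_smul, neg_zero, add_zero, zero_add, smul_neg, ww]
  simp only [← neg_smul, ← add_smul]
  congr 1
  ring

set_option maxHeartbeats 4000000 in
lemma mp02 (A : Matrix (Fin 6) (Fin 6) (MvPolynomial (Fin 7) k)) :
    (ff k 0 * ff k 2) * (toWedge A * toWedge A) = ((-2 : MvPolynomial (Fin 7) k) * pfQ A pf(0,2)) • ww k := by
  rw [toWedge_eq, sum_pfIdx (fun p => A p.1.1 p.1.2 • (ff k p.1.1 * ff k p.1.2))]
  rw [show pfQ A pf(0,2) = A 1 3 * A 4 5 - A 1 4 * A 3 5 + A 1 5 * A 3 4 from rfl]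
  simp (config := { decide := true }) only [add_mul, mul_add, smul_mul_assoc, mul_smul_comm,
    smul_smul, mul_assoc, ff_swap, ff_swap', ff_sq, ff_sq', mul_neg, neg_neg, mul_zero, zero_mul,
    mul_one, one_mul, smul_zero, zero_smul, neg_zero, add_zero, zero_add, smul_neg, ww]
  simp only [← neg_smul, ← add_smul]
  congr 1
  ring

set_option maxHeartbeats 4000000 in
lemma mp03 (A : Matrix (Fin 6) (Fin 6) (MvPolynomial (Fin 7) k)) :
    (ff k 0 * ff k 3) * (toWedge A * toWedge A) = ((2 : MvPolynomial (Fin 7) k) * pfQ A pf(0,3)) • ww k := by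
  rw [toWedge_eq, sum_pfIdx (fun p => A p.1.1 p.1.2 • (ff k p.1.1 * ff k p.1.2))]
  rw [show pfQ A pf(0,3) = A 1 2 * A 4 5 - A 1 4 * A 2 5 + A 1 5 * A 2 4 from rfl]
  simp (config := { decide := true }) only [add_mul, mul_add, smul_mul_assoc, mul_smul_comm,
    smul_smul, mul_assoc, ff_swap, ff_swap', ff_sq, ff_sq', mul_neg, neg_neg, mul_zero, zero_mul,
    mul_one, one_mul, smul_zero, zero_smul, neg_zero, add_zero, zero_add, smul_neg, ww]
  simp only [← neg_smul, ← add_smul]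
  congr 1
  ring

set_option maxHeartbeats 4000000 in
lemma mp04 (A : Matrix (Fin 6) (Fin 6) (MvPolynomial (Fin 7) k)) :
    (ff k 0 * ff k 4) * (toWedge A * toWedge A) = ((-2 : MvPolynomial (Fin 7) k) * pfQ A pf(0,4)) • ww k := by
  rw [toWedge_eq, sum_pfIdx (fun p => A p.1.1 p.1.2 • (ff k p.1.1 * ff k p.1.2))]
  rw [show pfQ A pf(0,4) = A 1 2 * A 3 5 - A 1 3 * A 2 5 + A 1 5 * A 2 3 from rfl]
  simp (config := { decide := true }) only [add_mul, mul_add, smul_mul_assoc, mul_smul_comm,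
    smul_smul, mul_assoc, ff_swap, ff_swap', ff_sq, ff_sq', mul_neg, neg_neg, mul_zero, zero_mul,
    mul_one, one_mul, smul_zero, zero_smul, neg_zero, add_zero, zero_add, smul_neg, ww]
  simp only [← neg_smul, ← add_smul]
  congr 1
  ring

set_option maxHeartbeats 4000000 in
lemma mp05 (A : Matrix (Fin 6) (Fin 6) (MvPolynomial (Fin 7) k)) :
    (ff k 0 * ff k 5) * (toWedge A * toWedge A) = ((2 : MvPolynomial (Fin 7) k) * pfQ A pf(0,5)) • ww k := by
  rw [toWedge_eq, sum_pfIdx (fun p => A p.1.1 p.1.2 • (ff k p.1.1 * ff k p.1.2))]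
  rw [show pfQ A pf(0,5) = A 1 2 * A 3 4 - A 1 3 * A 2 4 + A 1 4 * A 2 3 from rfl]
  simp (config := { decide := true }) only [add_mul, mul_add, smul_mul_assoc, mul_smul_comm,
    smul_smul, mul_assoc, ff_swap, ff_swap', ff_sq, ff_sq', mul_neg, neg_neg, mul_zero, zero_mul,
    mul_one, one_mul, smul_zero, zero_smul, neg_zero, add_zero, zero_add, smul_neg, ww]
  simp only [← neg_smul, ← add_smul]
  congr 1
  ring

set_option maxHeartbeats 4000000 in
lemma mp12 (A : Matrix (Fin 6) (Fin 6) (MvPolynomial (Fin 7) k)) :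
    (ff k 1 * ff k 2) * (toWedge A * toWedge A) = ((2 : MvPolynomial (Fin 7) k) * pfQ A pf(1,2)) • ww k := by
  rw [toWedge_eq, sum_pfIdx (fun p => A p.1.1 p.1.2 • (ff k p.1.1 * ff k p.1.2))]
  rw [show pfQ A pf(1,2) = A 0 3 * A 4 5 - A 0 4 * A 3 5 + A 0 5 * A 3 4 from rfl]
  simp (config := { decide := true }) only [add_mul, mul_add, smul_mul_assoc, mul_smul_comm,
    smul_smul, mul_assoc, ff_swap, ff_swap', ff_sq, ff_sq', mul_neg, neg_neg, mul_zero, zero_mul,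
    mul_one, one_mul, smul_zero, zero_smul, neg_zero, add_zero, zero_add, smul_neg, ww]
  simp only [← neg_smul, ← add_smul]
  congr 1
  ring

set_option maxHeartbeats 4000000 in
lemma mp13 (A : Matrix (Fin 6) (Fin 6) (MvPolynomial (Fin 7) k)) :
    (ff k 1 * ff k 3) * (toWedge A * toWedge A) = ((-2 : MvPolynomial (Fin 7) k) * pfQ A pf(1,3)) • ww k := by
  rw [toWedge_eq, sum_pfIdx (fun p => A p.1.1 p.1.2 • (ff k p.1.1 * ff k p.1.2))]
  rw [show pfQ A pf(1,3) = A 0 2 * A 4 5 - A 0 4 * A 2 5 + A 0 5 * A 2 4 from rfl]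
  simp (config := { decide := true }) only [add_mul, mul_add, smul_mul_assoc, mul_smul_comm,
    smul_smul, mul_assoc, ff_swap, ff_swap', ff_sq, ff_sq', mul_neg, neg_neg, mul_zero, zero_mul,
    mul_one, one_mul, smul_zero, zero_smul, neg_zero, add_zero, zero_add, smul_neg, ww]
  simp only [← neg_smul, ← add_smul]
  congr 1
  ring

set_option maxHeartbeats 4000000 in
lemma mp14 (A : Matrix (Fin 6) (Fin 6) (MvPolynomial (Fin 7) k)) :
    (ff k 1 * ff k 4) * (toWedge A * toWedge A) = ((2 : MvPolynomial (Fin 7) k) * pfQ A pf(1,4)) • ww k := by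
  rw [toWedge_eq, sum_pfIdx (fun p => A p.1.1 p.1.2 • (ff k p.1.1 * ff k p.1.2))]
  rw [show pfQ A pf(1,4) = A 0 2 * A 3 5 - A 0 3 * A 2 5 + A 0 5 * A 2 3 from rfl]
  simp (config := { decide := true }) only [add_mul, mul_add, smul_mul_assoc, mul_smul_comm,
    smul_smul, mul_assoc, ff_swap, ff_swap', ff_sq, ff_sq', mul_neg, neg_neg, mul_zero, zero_mul,
    mul_one, one_mul, smul_zero, zero_smul, neg_zero, add_zero, zero_add, smul_neg, ww]
  simp only [← neg_smul, ← add_smul]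
  congr 1
  ring

set_option maxHeartbeats 4000000 in
lemma mp15 (A : Matrix (Fin 6) (Fin 6) (MvPolynomial (Fin 7) k)) :
    (ff k 1 * ff k 5) * (toWedge A * toWedge A) = ((-2 : MvPolynomial (Fin 7) k) * pfQ A pf(1,5)) • ww k := by
  rw [toWedge_eq, sum_pfIdx (fun p => A p.1.1 p.1.2 • (ff k p.1.1 * ff k p.1.2))]
  rw [show pfQ A pf(1,5) = A 0 2 * A 3 4 - A 0 3 * A 2 4 + A 0 4 * A 2 3 from rfl]
  simp (config := { decide := true }) only [add_mul, mul_add, smul_mul_assoc, mul_smul_comm,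
    smul_smul, mul_assoc, ff_swap, ff_swap', ff_sq, ff_sq', mul_neg, neg_neg, mul_zero, zero_mul,
    mul_one, one_mul, smul_zero, zero_smul, neg_zero, add_zero, zero_add, smul_neg, ww]
  simp only [← neg_smul, ← add_smul]
  congr 1
  ring

set_option maxHeartbeats 4000000 in
lemma mp23 (A : Matrix (Fin 6) (Fin 6) (MvPolynomial (Fin 7) k)) :
    (ff k 2 * ff k 3) * (toWedge A * toWedge A) = ((2 : MvPolynomial (Fin 7) k) * pfQ A pf(2,3)) • ww k := by
  rw [toWedge_eq, sum_pfIdx (fun p => A p.1.1 p.1.2 • (ff k p.1.1 * ff k p.1.2))]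
  rw [show pfQ A pf(2,3) = A 0 1 * A 4 5 - A 0 4 * A 1 5 + A 0 5 * A 1 4 from rfl]
  simp (config := { decide := true }) only [add_mul, mul_add, smul_mul_assoc, mul_smul_comm,
    smul_smul, mul_assoc, ff_swap, ff_swap', ff_sq, ff_sq', mul_neg, neg_neg, mul_zero, zero_mul,
    mul_one, one_mul, smul_zero, zero_smul, neg_zero, add_zero, zero_add, smul_neg, ww]
  simp only [← neg_smul, ← add_smul]
  congr 1
  ring

set_option maxHeartbeats 4000000 in
lemma mp24 (A : Matrix (Fin 6) (Fin 6) (MvPolynomial (Fin 7) k)) :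
    (ff k 2 * ff k 4) * (toWedge A * toWedge A) = ((-2 : MvPolynomial (Fin 7) k) * pfQ A pf(2,4)) • ww k := by
  rw [toWedge_eq, sum_pfIdx (fun p => A p.1.1 p.1.2 • (ff k p.1.1 * ff k p.1.2))]
  rw [show pfQ A pf(2,4) = A 0 1 * A 3 5 - A 0 3 * A 1 5 + A 0 5 * A 1 3 from rfl]
  simp (config := { decide := true }) only [add_mul, mul_add, smul_mul_assoc, mul_smul_comm,
    smul_smul, mul_assoc, ff_swap, ff_swap', ff_sq, ff_sq', mul_neg, neg_neg, mul_zero, zero_mul,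
    mul_one, one_mul, smul_zero, zero_smul, neg_zero, add_zero, zero_add, smul_neg, ww]
  simp only [← neg_smul, ← add_smul]
  congr 1
  ring

set_option maxHeartbeats 4000000 in
lemma mp25 (A : Matrix (Fin 6) (Fin 6) (MvPolynomial (Fin 7) k)) :
    (ff k 2 * ff k 5) * (toWedge A * toWedge A) = ((2 : MvPolynomial (Fin 7) k) * pfQ A pf(2,5)) • ww k := by
  rw [toWedge_eq, sum_pfIdx (fun p => A p.1.1 p.1.2 • (ff k p.1.1 * ff k p.1.2))]
  rw [show pfQ A pf(2,5) = A 0 1 * A 3 4 - A 0 3 * A 1 4 + A 0 4 * A 1 3 from rfl]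
  simp (config := { decide := true }) only [add_mul, mul_add, smul_mul_assoc, mul_smul_comm,
    smul_smul, mul_assoc, ff_swap, ff_swap', ff_sq, ff_sq', mul_neg, neg_neg, mul_zero, zero_mul,
    mul_one, one_mul, smul_zero, zero_smul, neg_zero, add_zero, zero_add, smul_neg, ww]
  simp only [← neg_smul, ← add_smul]
  congr 1
  ring

set_option maxHeartbeats 4000000 in
lemma mp34 (A : Matrix (Fin 6) (Fin 6) (MvPolynomial (Fin 7) k)) :
    (ff k 3 * ff k 4) * (toWedge A * toWedge A) = ((2 : MvPolynomial (Fin 7) k) * pfQ A pf(3,4)) • ww k := by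
  rw [toWedge_eq, sum_pfIdx (fun p => A p.1.1 p.1.2 • (ff k p.1.1 * ff k p.1.2))]
  rw [show pfQ A pf(3,4) = A 0 1 * A 2 5 - A 0 2 * A 1 5 + A 0 5 * A 1 2 from rfl]
  simp (config := { decide := true }) only [add_mul, mul_add, smul_mul_assoc, mul_smul_comm,
    smul_smul, mul_assoc, ff_swap, ff_swap', ff_sq, ff_sq', mul_neg, neg_neg, mul_zero, zero_mul,
    mul_one, one_mul, smul_zero, zero_smul, neg_zero, add_zero, zero_add, smul_neg, ww]
  simp only [← neg_smul, ← add_smul]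
  congr 1
  ring

set_option maxHeartbeats 4000000 in
lemma mp35 (A : Matrix (Fin 6) (Fin 6) (MvPolynomial (Fin 7) k)) :
    (ff k 3 * ff k 5) * (toWedge A * toWedge A) = ((-2 : MvPolynomial (Fin 7) k) * pfQ A pf(3,5)) • ww k := by
  rw [toWedge_eq, sum_pfIdx (fun p => A p.1.1 p.1.2 • (ff k p.1.1 * ff k p.1.2))]
  rw [show pfQ A pf(3,5) = A 0 1 * A 2 4 - A 0 2 * A 1 4 + A 0 4 * A 1 2 from rfl]
  simp (config := { decide := true }) only [add_mul, mul_add, smul_mul_assoc, mul_smul_comm,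
    smul_smul, mul_assoc, ff_swap, ff_swap', ff_sq, ff_sq', mul_neg, neg_neg, mul_zero, zero_mul,
    mul_one, one_mul, smul_zero, zero_smul, neg_zero, add_zero, zero_add, smul_neg, ww]
  simp only [← neg_smul, ← add_smul]
  congr 1
  ring

set_option maxHeartbeats 4000000 in
lemma mp45 (A : Matrix (Fin 6) (Fin 6) (MvPolynomial (Fin 7) k)) :
    (ff k 4 * ff k 5) * (toWedge A * toWedge A) = ((2 : MvPolynomial (Fin 7) k) * pfQ A pf(4,5)) • ww k := by
  rw [toWedge_eq, sum_pfIdx (fun p => A p.1.1 p.1.2 • (ff k p.1.1 * ff k p.1.2))]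
  rw [show pfQ A pf(4,5) = A 0 1 * A 2 3 - A 0 2 * A 1 3 + A 0 3 * A 1 2 from rfl]
  simp (config := { decide := true }) only [add_mul, mul_add, smul_mul_assoc, mul_smul_comm,
    smul_smul, mul_assoc, ff_swap, ff_swap', ff_sq, ff_sq', mul_neg, neg_neg, mul_zero, zero_mul,
    mul_one, one_mul, smul_zero, zero_smul, neg_zero, add_zero, zero_add, smul_neg, ww]
  simp only [← neg_smul, ← add_smul]
  congr 1
  ring

/-- The sign `(-1)^(i+j+1)` attached to the pair `(i,j)`. -/
noncomputable def spf (p : PfIdx) : MvPolynomial (Fin 7) k :=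
  if (p.1.1.val + p.1.2.val) % 2 = 0 then -1 else 1

lemma spf01 : spf k pf(0,1) = 1 := rfl
lemma spf02 : spf k pf(0,2) = (-1) := rfl
lemma spf03 : spf k pf(0,3) = 1 := rfl
lemma spf04 : spf k pf(0,4) = (-1) := rfl
lemma spf05 : spf k pf(0,5) = 1 := rfl
lemma spf12 : spf k pf(1,2) = 1 := rfl
lemma spf13 : spf k pf(1,3) = (-1) := rfl
lemma spf14 : spf k pf(1,4) = 1 := rfl
lemma spf15 : spf k pf(1,5) = (-1) := rfl
lemma spf23 : spf k pf(2,3) = 1 := rfl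
lemma spf24 : spf k pf(2,4) = (-1) := rfl
lemma spf25 : spf k pf(2,5) = 1 := rfl
lemma spf34 : spf k pf(3,4) = 1 := rfl
lemma spf35 : spf k pf(3,5) = (-1) := rfl
lemma spf45 : spf k pf(4,5) = 1 := rfl

lemma spf_sq (p : PfIdx) : spf k p * spf k p = 1 := by
  unfold spf; split <;> ring

lemma spf_mul_hom (p : PfIdx) {x : MvPolynomial (Fin 7) k} (hx : x.IsHomogeneous 1) :
    (spf k p * x).IsHomogeneous 1 := by
  unfold spf; split
  · have h := (isHomogeneous_C (Fin 7) (-1 : k)).mul hx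
    rw [zero_add] at h
    simpa [_root_.map_neg, _root_.map_one] using h
  · rw [one_mul]; exact hx

lemma isHom_neg (x : MvPolynomial (Fin 7) k) (n : ℕ) (hx : x.IsHomogeneous n) :
    (-x).IsHomogeneous n := by
  have h := (isHomogeneous_C (Fin 7) (-1 : k)).mul hx
  rw [zero_add] at h
  simpa [_root_.map_neg, _root_.map_one, neg_one_mul] using h

set_option maxHeartbeats 4000000 in
lemma key (B A : Matrix (Fin 6) (Fin 6) (MvPolynomial (Fin 7) k)) :
    toWedge B * toWedge A * toWedge A
      = ((2 : MvPolynomial (Fin 7) k) * ∑ p : PfIdx, spf k p * B p.1.1 p.1.2 * pfQ A p) • ww k := by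
  rw [mul_assoc, toWedge_eq k B, sum_pfIdx (fun p => B p.1.1 p.1.2 • (ff k p.1.1 * ff k p.1.2)),
    sum_pfIdx (fun p => spf k p * B p.1.1 p.1.2 * pfQ A p)]
  simp only [add_mul, smul_mul_assoc, mp01, mp02, mp03, mp04, mp05, mp12, mp13, mp14, mp15,
    mp23, mp24, mp25, mp34, mp35, mp45, smul_smul, spf01, spf02, spf03, spf04, spf05, spf12,
    spf13, spf14, spf15, spf23, spf24, spf25, spf34, spf35, spf45]
  simp only [← add_smul]
  congr 1
  ring

/-- The family of alternating maps used to extract the top coefficient. -/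
noncomputable def Fd : ∀ i : ℕ,
    (Fin 6 → MvPolynomial (Fin 7) k) [⋀^Fin i]→ₗ[MvPolynomial (Fin 7) k] MvPolynomial (Fin 7) k
  | 6 => (Pi.basisFun (MvPolynomial (Fin 7) k) (Fin 6)).det
  | _ => 0

lemma Fd_six : Fd k 6 = (Pi.basisFun (MvPolynomial (Fin 7) k) (Fin 6)).det := rfl

lemma ww_eq : ww k = ιMulti (MvPolynomial (Fin 7) k) 6
    (fun i : Fin 6 => Pi.single i (1 : MvPolynomial (Fin 7) k)) := by
  rw [ιMulti_apply]
  simp only [List.ofFn_succ, List.ofFn_zero, List.prod_cons, List.prod_nil, mul_one]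
  rfl

lemma phi_ww : liftAlternating (Fd k) (ww k) = 1 := by
  rw [ww_eq, liftAlternating_apply_ιMulti, Fd_six]
  have h : (fun i : Fin 6 => Pi.single i (1 : MvPolynomial (Fin 7) k))
      = ⇑(Pi.basisFun (MvPolynomial (Fin 7) k) (Fin 6)) := by
    funext i; simp [Pi.basisFun_apply]
  rw [h, Module.Basis.det_self]

lemma smul_ww_zero {x : MvPolynomial (Fin 7) k} (h : x • ww k = 0) : x = 0 := by
  have h2 := congrArg (liftAlternating (Fd k)) h
  simpa [_root_.map_smul, phi_ww, smul_eq_mul] using h2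

/-- Projection of a linear-coefficient identity to constant coefficients. -/
lemma hc1 (r y : MvPolynomial (Fin 7) k) (hy : y.IsHomogeneous 1) :
    homogeneousComponent 1 (r * y) = C (coeff 0 r) * y := by
  conv_lhs => rw [← sum_homogeneousComponent r]
  rw [Finset.sum_mul, map_sum, Finset.sum_eq_single 0]
  · have hmem : homogeneousComponent 0 r * y ∈ homogeneousSubmodule (Fin 7) k 1 := by
      have h := (homogeneousComponent_isHomogeneous 0 r).mul hy
      rw [zero_add] at h
      exact (mem_homogeneousSubmodule _ _).mpr h
    rw [homogeneousComponent_of_mem hmem, if_pos rfl, homogeneousComponent_zero]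
  · intro i _ hne
    have hmem : homogeneousComponent i r * y ∈ homogeneousSubmodule (Fin 7) k (i + 1) := by
      exact (mem_homogeneousSubmodule _ _).mpr
        ((homogeneousComponent_isHomogeneous i r).mul hy)
    rw [homogeneousComponent_of_mem hmem, if_neg (by omega)]
  · intro h0
    exact absurd (Finset.mem_range.mpr (Nat.succ_pos _)) h0

end Aux

set_option maxHeartbeats 4000000 in
/-- Let `Λ ⊂ P¹⁴` be a 6-plane meeting `X = G(2,6)` transversally, `Γ = X ∩ Λ` (14 points)
cut out by the `4×4` Pfaffians of a `6×6` skew-symmetric matrix `A` of linear forms on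
`P⁶`.  Given the (restricted) resolution
`O_{P⁶}(−3)³⁵ → O_{P⁶}(−2)¹⁵ →^{A∧A} O_{P⁶} → O_Γ → 0` — i.e. 35 independent linear
syzygies `M` generating all syzygies of the 15 Pfaffian quadrics — the space of skew
matrices `B'` of linear forms with `B' ∧ A ∧ A = 0` has dimension `35 = dim sl(6)`. -/
theorem stmt_16 (k : Type*) [Field k] [CharZero k] [IsAlgClosed k]
    (A : Matrix (Fin 6) (Fin 6) (MvPolynomial (Fin 7) k))
    (hskew : Aᵀ = -A) (hlin : ∀ i j, (A i j).IsHomogeneous 1)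
    (htrans : ∃ v : Fin 14 → (Fin 7 → k), (∀ i, v i ≠ 0) ∧
      (∀ i i', i ≠ i' → ∀ c : k, v i' ≠ c • v i) ∧
      {x : Fin 7 → k | ∀ p : PfIdx, MvPolynomial.aeval x (pfQ A p) = 0} =
        ⋃ i, (Submodule.span k {v i} : Set (Fin 7 → k)))
    (hres : ∃ M : Fin 35 → (PfIdx → MvPolynomial (Fin 7) k),
      (∀ m p, (M m p).IsHomogeneous 1) ∧
      LinearIndependent k M ∧
      (∀ m, ∑ p : PfIdx, M m p * pfQ A p = 0) ∧
      (∀ c : PfIdx → MvPolynomial (Fin 7) k, (∑ p : PfIdx, c p * pfQ A p = 0) →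
        ∃ r : Fin 35 → MvPolynomial (Fin 7) k, ∀ p, c p = ∑ m, r m * M m p)) :
    ∃ b : Fin 35 → Matrix (Fin 6) (Fin 6) (MvPolynomial (Fin 7) k),
      (∀ m, IsSol A (b m)) ∧ LinearIndependent k b ∧
      (∀ B', IsSol A B' → ∃ c : Fin 35 → k, B' = ∑ m, c m • b m) := by
  classical
  obtain ⟨M, hM1, hM2, hM3, hM4⟩ := hres
  -- the basis of solutions
  set bb : Fin 35 → Matrix (Fin 6) (Fin 6) (MvPolynomial (Fin 7) k) :=
    fun m i j =>
      if h : i < j then spf k ⟨(i, j), h⟩ * M m ⟨(i, j), h⟩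
      else if h' : j < i then -(spf k ⟨(j, i), h'⟩ * M m ⟨(j, i), h'⟩) else 0 with hbb
  have hbb_apply : ∀ m (p : PfIdx), bb m p.1.1 p.1.2 = spf k p * M m p := by
    rintro m ⟨⟨i, j⟩, h⟩
    simp only [hbb, dif_pos h]
  have htwo : (2 : MvPolynomial (Fin 7) k) ≠ 0 := two_ne_zero
  -- skewness of bb
  have hbb_skew : ∀ m, (bb m)ᵀ = -(bb m) := by
    intro m
    refine Matrix.ext fun i j => ?_
    simp only [Matrix.transpose_apply, Matrix.neg_apply]
    rcases lt_trichotomy i j with h | h | h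
    · simp only [hbb, dif_pos h, dif_neg (lt_asymm h), dif_neg (lt_irrefl j), neg_neg]
    · subst h
      simp only [hbb, dif_neg (lt_irrefl i), neg_zero]
    · simp only [hbb, dif_pos h, dif_neg (lt_asymm h), dif_neg (lt_irrefl i), neg_neg]
  refine ⟨bb, ?_, ?_, ?_⟩
  · -- each bb m is a solution
    intro m
    refine ⟨hbb_skew m, ?_, ?_⟩
    · intro i j
      simp only [hbb]
      split
      · exact spf_mul_hom k _ (hM1 m _)
      · split
        · exact isHom_neg k _ _ (spf_mul_hom k _ (hM1 m _))
        · exact isHomogeneous_zero _ _ _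
    · rw [key]
      have hz : ∑ p : PfIdx, spf k p * bb m p.1.1 p.1.2 * pfQ A p = 0 := by
        have : ∀ p : PfIdx, spf k p * bb m p.1.1 p.1.2 * pfQ A p = M m p * pfQ A p := by
          intro p
          rw [hbb_apply m p, show spf k p * (spf k p * M m p) = spf k p * spf k p * M m p from
            (mul_assoc _ _ _).symm, spf_sq, one_mul]
        rw [Finset.sum_congr rfl fun p _ => this p]
        exact hM3 m
      rw [hz, mul_zero, zero_smul]
  · -- linear independence
    rw [Fintype.linearIndependent_iff]
    intro g hg
    have hM2' := Fintype.linearIndependent_iff.mp hM2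
    refine hM2' g ?_
    funext p
    have hent : ∑ m, g m • (spf k p * M m p) = 0 := by
      have h1 := congrFun (congrFun hg p.1.1) p.1.2
      have h2 : (∑ m, g m • bb m) p.1.1 p.1.2 = ∑ m, g m • bb m p.1.1 p.1.2 := by
        simp [Finset.sum_apply, Matrix.sum_apply, Matrix.smul_apply]
      rw [h2] at h1
      simpa [hbb_apply] using h1
    have : (∑ m, g m • M m) p = ∑ m, g m • M m p := by
      simp [Finset.sum_apply, Pi.smul_apply]
    rw [this]
    have hfold : ∑ m, g m • M m p = spf k p * ∑ m, g m • (spf k p * M m p) := by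
      rw [Finset.mul_sum]
      refine Finset.sum_congr rfl fun m _ => ?_
      rw [mul_smul_comm, show spf k p * (spf k p * M m p) = spf k p * spf k p * M m p from
        (mul_assoc _ _ _).symm, spf_sq, one_mul]
    rw [hfold, hent, mul_zero]
    simp
  · -- spanning
    rintro B' ⟨hsk, hhom, hw⟩
    have hskf : ∀ i j, B' j i = -(B' i j) := by
      intro i j
      have := congrFun (congrFun hsk i) j
      simpa [Matrix.transpose_apply, Matrix.neg_apply] using this
    have hkey := key k B' A
    rw [hw] at hkey
    have h2 : (2 : MvPolynomial (Fin 7) k) * ∑ p : PfIdx, spf k p * B' p.1.1 p.1.2 * pfQ A p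
        = 0 := smul_ww_zero k hkey.symm
    have hS : ∑ p : PfIdx, spf k p * B' p.1.1 p.1.2 * pfQ A p = 0 := by
      rcases mul_eq_zero.mp h2 with h | h
      · exact absurd h htwo
      · exact h
    obtain ⟨r, hr⟩ := hM4 (fun p => spf k p * B' p.1.1 p.1.2) hS
    set t : Fin 35 → k := fun m => coeff 0 (r m) with ht
    have hc : ∀ p : PfIdx, spf k p * B' p.1.1 p.1.2 = ∑ m, C (t m) * M m p := by
      intro p
      have hhc : (spf k p * B' p.1.1 p.1.2).IsHomogeneous 1 := spf_mul_hom k p (hhom _ _)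
      have e1 : spf k p * B' p.1.1 p.1.2
          = homogeneousComponent 1 (spf k p * B' p.1.1 p.1.2) := by
        rw [homogeneousComponent_of_mem ((mem_homogeneousSubmodule _ _).mpr hhc),
          if_pos rfl]
      rw [e1, hr p, map_sum]
      exact Finset.sum_congr rfl fun m _ => hc1 k (r m) (M m p) (hM1 m p)
    have hupper : ∀ (i j : Fin 6) (h : i < j), B' i j = ∑ m, t m • bb m i j := by
      intro i j h
      have h1 := hc ⟨(i, j), h⟩
      have e2 : B' i j = spf k ⟨(i, j), h⟩ * (spf k ⟨(i, j), h⟩ * B' i j) := by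
        rw [show spf k ⟨(i, j), h⟩ * (spf k ⟨(i, j), h⟩ * B' i j)
          = spf k ⟨(i, j), h⟩ * spf k ⟨(i, j), h⟩ * B' i j from (mul_assoc _ _ _).symm,
          spf_sq, one_mul]
      rw [e2, h1, Finset.mul_sum]
      refine Finset.sum_congr rfl fun m _ => ?_
      have hb : bb m i j = spf k ⟨(i, j), h⟩ * M m ⟨(i, j), h⟩ := hbb_apply m ⟨(i, j), h⟩
      rw [hb, smul_eq_C_mul]
      ring
    have hrhs : ∀ (i j : Fin 6), (∑ m, t m • bb m) i j = ∑ m, t m • bb m i j := by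
      intro i j
      simp [Finset.sum_apply, Matrix.sum_apply, Matrix.smul_apply]
    refine ⟨t, Matrix.ext fun i j => ?_⟩
    rw [hrhs]
    rcases lt_trichotomy i j with h | h | h
    · exact hupper i j h
    · subst h
      have hz : B' i i = 0 := by
        have h1 := hskf i i
        have h2 : (2 : MvPolynomial (Fin 7) k) * B' i i = 0 := by
          rw [two_mul]
          linear_combination h1
        rcases mul_eq_zero.mp h2 with h | h
        · exact absurd h htwo
        · exact h
      rw [hz]
      have : ∀ m : Fin 35, bb m i i = 0 := by
        intro m
        simp [hbb, lt_irrefl]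
      simp [this]
    · have h1 : B' i j = -(B' j i) := by rw [hskf j i]
      have h2 : ∀ m : Fin 35, bb m i j = -(bb m j i) := by
        intro m
        have := congrFun (congrFun (hbb_skew m) j) i
        simpa [Matrix.transpose_apply, Matrix.neg_apply] using this
      rw [h1, hupper j i h]
      rw [← Finset.sum_neg_distrib]
      refine Finset.sum_congr rfl fun m _ => ?_
      rw [h2 m, smul_neg]
end
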